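/- Let {Λ_1, ..., Λ_d} and Λ be extended-real-valued functions with, for some index set structure, (1/n) log E[e^{θ S_n}] ≤ (1/n) log(n Σ_{i,j} E[e^{θ D_{[0,n]}^{(i,j)}}]) and lim_n (1/n) log E[e^{θ D_{[1,n]}^{(i,j)}}] = max_{k ∈ [i≤j]} Λ_{[k]}(θ) for θ ∈ [0,η). Then Λ_S(θ) = max_{1≤ℓ≤d} Λ_ℓ(θ) for all θ ∈ [0,η). -/

import Mathlib

open Filter ENNReal
open scoped Topology

/-!
With `growthRate x n = n⁻¹ log (x n)`, the diagonal bounds `g i i ≤ f` and the surjectivity of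
`c` make every `Λ_ℓ` a lower bound for the liminf of the growth rate of `f`. Conversely
`f ≤ n ∑ g i j`, the factor `n` has growth rate `0`, and the growth rate of a finite sum tends
to the maximum of the limiting rates of its terms (Dembo–Zeitouni, Lemma 1.2.15); each of these
limits `⨆ k ∈ K i j, Λ_k` is at most `⨆ ℓ, Λ_ℓ`.
-/

noncomputable def growthRate (x : ℕ → ℝ≥0∞) (n : ℕ) : EReal :=
  (((n : ℝ)⁻¹ : ℝ) : EReal) * ENNReal.log (x n)

lemma monotone_inv_mul_log (n : ℕ) :
    Monotone fun t : ℝ≥0∞ => (((n : ℝ)⁻¹ : ℝ) : EReal) * ENNReal.log t :=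
  fun _ _ h =>
    mul_le_mul_of_nonneg_left (ENNReal.log_monotone h) (EReal.coe_nonneg.2 (by positivity))

lemma monotone_growthRate : Monotone growthRate :=
  fun _ _ h n => monotone_inv_mul_log n (h n)

lemma growthRate_sup (x y : ℕ → ℝ≥0∞) : growthRate (x ⊔ y) = growthRate x ⊔ growthRate y :=
  funext fun n => (monotone_inv_mul_log n).map_max

lemma growthRate_mul (x y : ℕ → ℝ≥0∞) : growthRate (x * y) = growthRate x + growthRate y :=
  funext fun n => by
    have hn : (0 : EReal) ≤ (((n : ℝ)⁻¹ : ℝ) : EReal) := EReal.coe_nonneg.2 (by positivity)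
    simp only [growthRate, Pi.mul_apply, Pi.add_apply, log_mul_add,
      EReal.left_distrib_of_nonneg_of_ne_top hn (EReal.coe_ne_top _)]

lemma tendsto_growthRate_mul {a x : ℕ → ℝ≥0∞} {L : EReal}
    (ha : Tendsto (growthRate a) atTop (𝓝 0)) (hx : Tendsto (growthRate x) atTop (𝓝 L)) :
    Tendsto (growthRate (a * x)) atTop (𝓝 L) := by
  have hadd := (EReal.continuousAt_add (p := (0, L)) (by simp) (by simp)).tendsto.comp
    (ha.prodMk_nhds hx)
  rw [zero_add] at hadd
  rwa [growthRate_mul]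

lemma tendsto_growthRate_const {a : ℝ≥0∞} (ha₀ : a ≠ 0) (ha : a ≠ ⊤) :
    Tendsto (growthRate fun _ => a) atTop (𝓝 0) := by
  have hlog : ENNReal.log a = Real.log a.toReal := by
    conv_lhs => rw [← ENNReal.ofReal_toReal ha]
    exact log_ofReal_of_pos (toReal_pos ha₀ ha)
  have hinv : Tendsto (fun n : ℕ => (n : ℝ)⁻¹ * Real.log a.toReal) atTop (𝓝 0) := by
    simpa using tendsto_inv_atTop_nhds_zero_nat.mul_const (Real.log a.toReal)
  refine (EReal.tendsto_coe.2 hinv).congr fun n => ?_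
  rw [growthRate, hlog, EReal.coe_mul]

lemma tendsto_growthRate_natCast : Tendsto (growthRate fun n => (n : ℝ≥0∞)) atTop (𝓝 0) := by
  have hlog : Tendsto (fun n : ℕ => Real.log n / n) atTop (𝓝 0) := by
    simpa [Function.comp_def] using (Real.tendsto_pow_log_div_mul_add_atTop 1 0 1 one_ne_zero).comp
      tendsto_natCast_atTop_atTop
  refine (EReal.tendsto_coe.2 hlog).congr' ?_
  filter_upwards [eventually_ge_atTop 1] with n hn
  rw [growthRate, ← ENNReal.ofReal_natCast, ENNReal.log_ofReal_of_pos (by exact_mod_cast hn),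
    ← EReal.coe_mul, inv_mul_eq_div]

lemma tendsto_growthRate_zero : Tendsto (growthRate 0) atTop (𝓝 ⊥) := by
  refine tendsto_const_nhds.congr' ?_
  filter_upwards [eventually_ge_atTop 1] with n hn
  rw [growthRate, Pi.zero_apply, log_zero, EReal.mul_bot_of_pos (EReal.coe_pos.2 (by positivity))]

lemma tendsto_growthRate_add {x y : ℕ → ℝ≥0∞} {L₁ L₂ : EReal}
    (hx : Tendsto (growthRate x) atTop (𝓝 L₁)) (hy : Tendsto (growthRate y) atTop (𝓝 L₂)) :
    Tendsto (growthRate (x + y)) atTop (𝓝 (max L₁ L₂)) := by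
  -- `x ⊔ y ≤ x + y ≤ 2 (x ⊔ y)`, and the constant `2` has growth rate `0`.
  have hmax : Tendsto (growthRate (x ⊔ y)) atTop (𝓝 (max L₁ L₂)) := by
    rw [growthRate_sup]; exact hx.max hy
  have h2max : Tendsto (growthRate ((fun _ => 2) * (x ⊔ y))) atTop (𝓝 (max L₁ L₂)) :=
    tendsto_growthRate_mul (tendsto_growthRate_const two_ne_zero ofNat_ne_top) hmax
  refine tendsto_of_tendsto_of_tendsto_of_le_of_le hmax h2max
    (monotone_growthRate (sup_le le_self_add le_add_self)) (monotone_growthRate fun n => ?_)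
  simpa [two_mul] using add_le_add (le_max_left (x n) (y n)) (le_max_right (x n) (y n))

lemma tendsto_growthRate_sum {ι : Type*} (t : Finset ι) {x : ι → ℕ → ℝ≥0∞} {L : ι → EReal}
    (h : ∀ i ∈ t, Tendsto (growthRate (x i)) atTop (𝓝 (L i))) :
    Tendsto (growthRate (∑ i ∈ t, x i)) atTop (𝓝 (t.sup L)) := by
  classical
  induction t using Finset.induction_on with
  | empty => simpa using tendsto_growthRate_zero
  | insert i t hi ih =>
    rw [Finset.sum_insert hi, Finset.sup_insert]
    exact tendsto_growthRate_add (h i (t.mem_insert_self i))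
      (ih fun j hj => h j (Finset.mem_insert_of_mem hj))

theorem lambdaS_eq_sup_blocks_general (s d : ℕ)
    (f : ℕ → ℝ≥0∞) (g : Fin s → Fin s → ℕ → ℝ≥0∞)
    (c : Fin s → Fin d) (K : Fin s → Fin s → Set (Fin d)) (Lam : Fin d → EReal)
    (hsurj : Function.Surjective c)
    (hKdiag : ∀ i, K i i = {c i})
    (hupper : ∀ n : ℕ, f n ≤ (n : ℝ≥0∞) * ∑ i : Fin s, ∑ j : Fin s, g i j n)
    (hlower : ∀ (i : Fin s) (n : ℕ), g i i n ≤ f n)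
    (hlim : ∀ i j : Fin s,
      Tendsto (fun n : ℕ => (((n : ℝ)⁻¹ : ℝ) : EReal) * ENNReal.log (g i j n)) atTop
        (nhds (⨆ k ∈ K i j, Lam k))) :
    Tendsto (fun n : ℕ => (((n : ℝ)⁻¹ : ℝ) : EReal) * ENNReal.log (f n)) atTop
      (nhds (⨆ ℓ : Fin d, Lam ℓ)) := by
  change Tendsto (growthRate f) atTop _
  have hdiag (i : Fin s) : Tendsto (growthRate (g i i)) atTop (𝓝 (Lam (c i))) := by
    have h := hlim i i
    rwa [hKdiag, iSup_singleton] at h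
  have hsum : Tendsto (growthRate ((fun n : ℕ => (n : ℝ≥0∞)) * ∑ i, ∑ j, g i j)) atTop
      (𝓝 (Finset.univ.sup fun i => Finset.univ.sup fun j => ⨆ k ∈ K i j, Lam k)) :=
    tendsto_growthRate_mul tendsto_growthRate_natCast
      (tendsto_growthRate_sum _ fun i _ => tendsto_growthRate_sum _ fun j _ => hlim i j)
  refine tendsto_of_le_liminf_of_limsup_le (iSup_le fun ℓ => ?_) ?_
  · obtain ⟨i, rfl⟩ := hsurj ℓ
    rw [← (hdiag i).liminf_eq]
    exact liminf_le_liminf (.of_forall (monotone_growthRate (hlower i)))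
  · calc limsup (growthRate f) atTop
        ≤ limsup (growthRate ((fun n : ℕ => (n : ℝ≥0∞)) * ∑ i, ∑ j, g i j)) atTop :=
          limsup_le_limsup (.of_forall (monotone_growthRate fun n => by simpa using hupper n))
      _ = _ := hsum.limsup_eq
      _ ≤ ⨆ ℓ, Lam ℓ := Finset.sup_le fun i _ => Finset.sup_le fun j _ =>
          iSup₂_le fun k _ => le_iSup Lam k

/-- Lemma 5.8 (abstract form): if the moment generating sequence `f n = E[e^{θ S_n}]`
of the maximal dater is squeezed between the entrywise moment sequences
`g i j n = E[e^{θ D_{[·,n]}^{(i,j)}}]` (lower bound from the diagonal, upper bound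
`f n ≤ n Σ_{i,j} g i j n`), the classes `[i ≤ j]` satisfy `[i ≤ i] = {[i]}`, every class
is realized, and `(1/n) log g i j n → max_{k ∈ [i≤j]} Λ_k`, then
`Λ_S(θ) = lim (1/n) log f n = max_ℓ Λ_ℓ(θ)`. -/
theorem lambdaS_eq_sup_blocks (s d : ℕ) (hs : 0 < s) (hd : 0 < d)
    (f : ℕ → ℝ≥0∞) (g : Fin s → Fin s → ℕ → ℝ≥0∞)
    (c : Fin s → Fin d) (K : Fin s → Fin s → Set (Fin d)) (Lam : Fin d → EReal)
    (hsurj : Function.Surjective c)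
    (hKdiag : ∀ i, K i i = {c i})
    (hupper : ∀ n : ℕ, f n ≤ (n : ℝ≥0∞) * ∑ i : Fin s, ∑ j : Fin s, g i j n)
    (hlower : ∀ (i : Fin s) (n : ℕ), g i i n ≤ f n)
    (hlim : ∀ i j : Fin s,
      Tendsto (fun n : ℕ => (((n : ℝ)⁻¹ : ℝ) : EReal) * ENNReal.log (g i j n)) atTop
        (nhds (⨆ k ∈ K i j, Lam k))) :
    Tendsto (fun n : ℕ => (((n : ℝ)⁻¹ : ℝ) : EReal) * ENNReal.log (f n)) atTop
      (nhds (⨆ ℓ : Fin d, Lam ℓ)) :=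
  lambdaS_eq_sup_blocks_general s d f g c K Lam hsurj hKdiag hupper hlower hlim
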